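/- If two n-step complete executions of a program produce equal concatenated leakage at every prefix length (i.e., the executions are lock-step leak-equal), and the semantics ensures the leakage of each conditional step determines the branch taken, then the two executions visit syntactically identical sequences of commands. -/
import Mathlib


/-- Arithmetic operators. -/
inductive AOp | add | sub | mul | div | mod
deriving DecidableEq

/-- Arithmetic expressions. -/
inductive AExpr
  | const (v : Int)
  | var (x : String)
  | binop (o : AOp) (e1 e2 : AExpr)
deriving DecidableEq

/-- Boolean expressions. -/
inductive BExpr
  | tt
  | ff
  | or (b1 b2 : BExpr)
  | not (b : BExpr)
  | le (e1 e2 : AExpr)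
  | eq (e1 e2 : AExpr)
deriving DecidableEq

/-- Commands of the small imperative language. -/
inductive Cmd
  | skip
  | assign (x : String) (e : AExpr)
  | seq (c1 c2 : Cmd)
  | ite (b : BExpr) (c1 c2 : Cmd)
  | whileDo (b : BExpr) (c : Cmd)
deriving DecidableEq

abbrev Store := String → Int

def AOp.denote : AOp → Int → Int → Int
  | .add => (· + ·)
  | .sub => (· - ·)
  | .mul => (· * ·)
  | .div => (· / ·)
  | .mod => (· % ·)

/-- Total evaluation of arithmetic expressions. -/
def aeval : AExpr → Store → Int
  | .const v, _ => v
  | .var x, σ => σ x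
  | .binop o e1 e2, σ => o.denote (aeval e1 σ) (aeval e2 σ)

/-- Total evaluation of boolean expressions. -/
def beval : BExpr → Store → Bool
  | .tt, _ => true
  | .ff, _ => false
  | .or b1 b2, σ => beval b1 σ || beval b2 σ
  | .not b, σ => !(beval b σ)
  | .le e1 e2, σ => decide (aeval e1 σ ≤ aeval e2 σ)
  | .eq e1 e2, σ => decide (aeval e1 σ = aeval e2 σ)

/-- Atomic leaks. -/
inductive Leak
  | eps
  | op (o : AOp)
  | ident (x : String)
  | branch (b : Bool)
deriving DecidableEq

/-- Leakage of an arithmetic expression in a state. -/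
def aleak : AExpr → Store → List Leak
  | .const _, _ => [.eps]
  | .var _, _ => [.eps]
  | .binop o e1 e2, σ => aleak e1 σ ++ aleak e2 σ ++ [.op o]

/-- Leakage of a boolean expression in a state. -/
def bleak : BExpr → Store → List Leak
  | .tt, _ => [.eps]
  | .ff, _ => [.eps]
  | .not b, σ => bleak b σ
  | .or b1 b2, σ => bleak b1 σ ++ bleak b2 σ
  | .le e1 e2, σ => aleak e1 σ ++ aleak e2 σ
  | .eq e1 e2, σ => aleak e1 σ ++ aleak e2 σ

/-- Instrumented small-step operational semantics. -/
inductive Step : Cmd × Store → List Leak → Cmd × Store → Prop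
  | assign {x e σ} :
      Step (.assign x e, σ) (aleak e σ ++ [.ident x])
        (.skip, Function.update σ x (aeval e σ))
  | seqStep {c1 σ t c1' σ'} (c2 : Cmd) :
      Step (c1, σ) t (c1', σ') → Step (.seq c1 c2, σ) t (.seq c1' c2, σ')
  | seqSkip {σ} (c2 : Cmd) : Step (.seq .skip c2, σ) [.eps] (c2, σ)
  | iteTrue {b c1 c2 σ} :
      beval b σ = true →
      Step (.ite b c1 c2, σ) (bleak b σ ++ [.branch true]) (c1, σ)
  | iteFalse {b c1 c2 σ} :
      beval b σ = false →
      Step (.ite b c1 c2, σ) (bleak b σ ++ [.branch false]) (c2, σ)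
  | whileUnfold {b c σ} :
      Step (.whileDo b c, σ) [.eps] (.ite b (.seq c (.whileDo b c)) .skip, σ)

/-- Reflexive-transitive closure of the step relation (leaks ignored). -/
inductive StepStar : Cmd × Store → Cmd × Store → Prop
  | refl (A : Cmd × Store) : StepStar A A
  | tail {A B C : Cmd × Store} {t : List Leak} : StepStar A B → Step B t C → StepStar A C

/-- n-step execution, accumulating leakage. -/
inductive StepsN : Cmd × Store → ℕ → List Leak → Cmd × Store → Prop
  | refl (A : Cmd × Store) : StepsN A 0 [] A
  | step {A B C : Cmd × Store} {t u : List Leak} {n : ℕ} :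
      Step A t B → StepsN B n u C → StepsN A (n + 1) (t ++ u) C

lemma skip_no_step {σ t B} : ¬ Step (.skip, σ) t B := by
  intro h; cases h

lemma step_det (c : Cmd) : ∀ {σ t c1 σ1 σ' t' c1' σ1'},
    Step (c, σ) t (c1, σ1) → Step (c, σ') t' (c1', σ1') → t = t' → c1 = c1' := by
  induction c with
  | skip => intro _ _ _ _ _ _ _ _ h1 _ _; exact absurd h1 skip_no_step
  | assign x e => intro _ _ _ _ _ _ _ _ h1 h2 _; cases h1; cases h2; rfl
  | seq a b ih ih2 =>
      intro _ _ _ _ _ _ _ _ h1 h2 ht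
      cases h1 with
      | seqStep _ h1' =>
          cases h2 with
          | seqStep _ h2' => rw [ih h1' h2' ht]
          | seqSkip => exact absurd h1' skip_no_step
      | seqSkip =>
          cases h2 with
          | seqStep _ h2' => exact absurd h2' skip_no_step
          | seqSkip => rfl
  | ite b c1 c2 ih1 ih2 =>
      intro _ _ _ _ _ _ _ _ h1 h2 ht
      cases h1 with
      | iteTrue hb =>
          cases h2 with
          | iteTrue hb' => rfl
          | iteFalse hb' =>
              have := congrArg List.getLast? ht
              simp [List.getLast?_append] at this
      | iteFalse hb =>
          cases h2 with
          | iteFalse hb' => rfl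
          | iteTrue hb' =>
              have := congrArg List.getLast? ht
              simp [List.getLast?_append] at this
  | whileDo b c ih =>
      intro _ _ _ _ _ _ _ _ h1 h2 _; cases h1; cases h2; rfl

/-- two lock-step leak-equal executions of the same program visit
syntactically identical sequences of commands. -/
theorem lockstep_leak_equal_same_commands (p : Cmd) (σ σ' : Store) (n : ℕ)
    (A A' : ℕ → Cmd × Store) (l l' : ℕ → List Leak)
    (h0 : A 0 = (p, σ)) (h0' : A' 0 = (p, σ'))
    (hs : ∀ i < n, Step (A i) (l i) (A (i + 1)))
    (hs' : ∀ i < n, Step (A' i) (l' i) (A' (i + 1)))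
    (hleak : ∀ i < n, l i = l' i) :
    ∀ i ≤ n, (A i).1 = (A' i).1 := by
  intro i
  induction i with
  | zero => intro _; rw [h0, h0']
  | succ k ih =>
      intro hk
      have hk' : k < n := hk
      have heq := ih (le_of_lt hk')
      have h1 : Step ((A k).1, (A k).2) (l k) ((A (k + 1)).1, (A (k + 1)).2) := by
        simpa using hs k hk'
      have h2 : Step ((A k).1, (A' k).2) (l' k) ((A' (k + 1)).1, (A' (k + 1)).2) := by
        rw [heq]; simpa using hs' k hk'
      exact step_det _ h1 h2 (hleak k hk')
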